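/- arXiv:1204.5243 — 2 statements merged into one kernel-verified Lean document; each statement's English description precedes it below -/
import Mathlib

section
/- Let 𝒴 ⊆ ℝ be measurable and Γ ⊆ ℝ, and let φ : 𝒴 × Γ → (0, ∞) be a kernel such that each φ(·, γ) is a probability density on 𝒴. Let k_0 ≥ 1, let p_0 = (p_{01}, …, p_{0k_0}) lie in the probability simplex, and let γ_0 = (γ_{01}, …, γ_{0k_0}) ∈ Γ^{k_0} satisfy min_{s < j} |γ_{0s} − γ_{0j}| ≥ ε_1 for some ε_1 > 0; set f_0(y) = Σ_{h=1}^{k_0} p_{0h} φ(y, γ_{0h}). Assume: (A1) for every η > 0 there is δ > 0 such that for all y ∈ 𝒴 and all γ_1, γ_2 ∈ Γ with |γ_1 − γ_2| < δ one has |φ(y, γ_1) − φ(y, γ_2)| < η; (A2) φ is bounded above by a constant; (A3) there is a compact set D_0 ⊆ Γ containing γ_{01}, …, γ_{0k_0} in its interior such that ∫ f_0(y) |log sup_{γ ∈ D_0} φ(y, γ) − log inf_{γ ∈ D_0} φ(y, γ)| dy < ∞; (A4) the prior π on Γ^{k_0} has a Lebesgue density that is continuous, and for every x ∈ Γ^{k_0}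 with min_{s < j} |x_s − x_j| ≥ υ for some υ > 0 there exists δ > 0 such that the density of π is strictly positive at every γ with ‖γ − x‖_1 < δ; and the prior λ on the simplex {p : p_h ≥ 0, Σ p_h = 1} assigns strictly positive mass to every nonempty relatively open subset of the simplex. Then for every ε > 0, (λ ⊗ π){(p, γ) : ∫ f_0(y) log(f_0(y) / f_{p,γ}(y)) dy < ε} > 0, where f_{p,γ}(y) = Σ_{h=1}^{k_0} p_h φ(y, γ_h). That is, f_0 is in the Kullback–Leibler support of the induced prior on mixture densities. -/
/-!
Write `f₀` for the true mixture and `f` for the mixture with parameters `(p, γ)`. On the compact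
set `D₀` the kernel is squeezed between the envelopes `m y = inf φ(y, ·) > 0` and
`M y = sup φ(y, ·)`, so `f₀ log (f₀ / f) ≤ f₀ |log M - log m|` whenever `p` lies in the simplex and
every `γ i` lies in `D₀`; by (A3) and dominated convergence this bound has small integral over
`{f₀ ≤ t}` for small `t > 0`. By (A1) and (A2), `f` is uniformly within `c` of `f₀` for `(p, γ)`
close to `(p₀, γ₀)`, so on `{f₀ > t}` we get `log (f₀ / f) ≤ (f₀ - f) / f ≤ 2c / t`. The parameters
close to `(p₀, γ₀)` form a product of a relatively open neighbourhood of `p₀` in the simplex and an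
open neighbourhood of `γ₀`; the first has positive `lam`-mass by assumption, the second positive
prior mass because the continuous density is positive at the well-separated `γ₀` by (A4).
-/

open MeasureTheory Filter Topology Real Set

theorem log_div_le_of_abs_sub_le {a b c t : ℝ} (ht : 0 < t) (hta : t < a) (hc : c ≤ t / 2)
    (hb : |b - a| ≤ c) : log (a / b) ≤ 2 * c / t := by
  have hc0 : 0 ≤ c := (abs_nonneg _).trans hb
  have hbt : t / 2 ≤ b := by linarith [(abs_le.mp hb).1]
  have hb0 : 0 < b := by linarith
  calc log (a / b) ≤ a / b - 1 := log_le_sub_one_of_pos (div_pos (by linarith) hb0)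
    _ = (a - b) / b := by field_simp
    _ ≤ c / (t / 2) := by gcongr; linarith [(abs_le.mp hb).1]
    _ = 2 * c / t := by field_simp

theorem log_div_le_abs_log_sub_log {a b m M : ℝ} (ha : 0 < a) (hm : 0 < m) (haM : a ≤ M)
    (hmb : m ≤ b) : log (a / b) ≤ |log M - log m| := by
  rw [log_div ha.ne' (hm.trans_le hmb).ne']
  have := log_le_log ha haM
  have := log_le_log hm hmb
  linarith [le_abs_self (log M - log m)]

section SetIntegral

variable {α : Type*} [MeasurableSpace α] {μ : Measure α}

theorem tendsto_setIntegral_setOf_le_nhds_zero {f h : α → ℝ} (hf : AEMeasurable f μ)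
    (hpos : ∀ᵐ x ∂μ, 0 < f x) (hh : Integrable h μ) :
    Tendsto (fun t => ∫ x in {x | f x ≤ t}, h x ∂μ) (𝓝 0) (𝓝 0) := by
  have hs (t : ℝ) : NullMeasurableSet {x | f x ≤ t} μ := nullMeasurableSet_le hf aemeasurable_const
  have hlim : Tendsto (fun t => ∫ x, {x | f x ≤ t}.indicator h x ∂μ) (𝓝 0)
      (𝓝 (∫ _ : α, (0 : ℝ) ∂μ)) := by
    refine tendsto_integral_filter_of_dominated_convergence (fun x => ‖h x‖)
      (.of_forall fun t => hh.aestronglyMeasurable.indicator₀ (hs t))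
      (.of_forall fun t => .of_forall fun x => norm_indicator_le_norm_self h x) hh.norm ?_
    filter_upwards [hpos] with x hx
    refine tendsto_const_nhds.congr' ?_
    filter_upwards [gt_mem_nhds hx] with t ht
    exact (indicator_of_notMem (s := {x | f x ≤ t}) (not_le.mpr ht) h).symm
  simpa [integral_indicator₀ (hs _)] using hlim

theorem integral_mul_log_div_lt {f g B : α → ℝ} {t ε : ℝ} (hε : 0 < ε) (ht : 0 < t)
    (hf : Integrable f μ) (hf1 : ∫ x, f x ∂μ = 1) (hB : Integrable B μ)
    (hBt : ∫ x in {x | f x ≤ t}, B x ∂μ < ε / 2)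
    (hfpos : ∀ᵐ x ∂μ, 0 < f x)
    (hclose : ∀ᵐ x ∂μ, |g x - f x| ≤ min (t / 2) (t * ε / 8))
    (hle : ∀ᵐ x ∂μ, f x * log (f x / g x) ≤ B x) :
    ∫ x, f x * log (f x / g x) ∂μ < ε := by
  by_cases hint : Integrable (fun x => f x * log (f x / g x)) μ
  swap
  · -- the Bochner integral of a non-integrable function is `0`
    rwa [integral_undef hint]
  set c := min (t / 2) (t * ε / 8)
  set s := {x | f x ≤ t}
  have hs : NullMeasurableSet s μ := nullMeasurableSet_le hf.aemeasurable aemeasurable_const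
  have hc : 2 * c / t ≤ ε / 4 := by
    rw [div_le_iff₀ ht]; linarith [min_le_right (t / 2) (t * ε / 8)]
  have hout : ∀ᵐ x ∂μ.restrict sᶜ, f x * log (f x / g x) ≤ 2 * c / t * f x := by
    filter_upwards [ae_restrict_mem₀ hs.compl, ae_restrict_of_ae hfpos, ae_restrict_of_ae hclose]
      with x hxs hfx hx
    rw [mul_comm _ (f x)]
    exact mul_le_mul_of_nonneg_left
      (log_div_le_of_abs_sub_le ht (not_le.mp hxs) (min_le_left _ _) hx) hfx.le
  calc ∫ x, f x * log (f x / g x) ∂μ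
      = ∫ x in s, f x * log (f x / g x) ∂μ + ∫ x in sᶜ, f x * log (f x / g x) ∂μ :=
        (integral_add_compl₀ hs hint).symm
    _ ≤ ∫ x in s, B x ∂μ + ∫ x in sᶜ, 2 * c / t * f x ∂μ :=
        add_le_add (setIntegral_mono_ae_restrict hint.integrableOn hB.integrableOn
          (ae_restrict_of_ae hle))
          (setIntegral_mono_ae_restrict hint.integrableOn (hf.const_mul _).integrableOn hout)
    _ ≤ ∫ x in s, B x ∂μ + ∫ x, 2 * c / t * f x ∂μ := by
        refine add_le_add_right (setIntegral_le_integral (hf.const_mul _) ?_) _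
        filter_upwards [hfpos] with x hx
        have : 0 ≤ c := le_min (by linarith) (by positivity)
        positivity
    _ < ε := by
        rw [integral_const_mul, hf1]
        linarith

end SetIntegral

theorem withDensity_ofReal_pos {X : Type*} [TopologicalSpace X] [MeasurableSpace X]
    [OpensMeasurableSpace X] {μ : Measure X} [μ.IsOpenPosMeasure] {f : X → ℝ}
    (hf : Continuous f) {U : Set X} (hU : IsOpen U) {x : X} (hxU : x ∈ U) (hx : 0 < f x) :
    0 < μ.withDensity (fun y => ENNReal.ofReal (f y)) U := by
  rw [pos_iff_ne_zero, Ne, withDensity_apply_eq_zero' hf.measurable.ennreal_ofReal.aemeasurable]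
  refine ((((isOpen_lt continuous_const hf).inter hU).measure_pos μ ⟨x, hx, hxU⟩).trans_le
    (measure_mono ?_)).ne'
  rintro y ⟨hy, hyU⟩
  exact ⟨by simpa using hy, hyU⟩

theorem IsCompact.sInf_image_pos {G : Type*} [TopologicalSpace G] {u : G → ℝ} {K : Set G}
    (hK : IsCompact K) (hne : K.Nonempty) (hu : ContinuousOn u K) (hpos : ∀ x ∈ K, 0 < u x) :
    0 < sInf (u '' K) := by
  obtain ⟨x, hx, hux⟩ := (hK.image_of_continuousOn hu).sInf_mem (hne.image u)
  exact hux ▸ hpos x hx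

section Mixture

variable {ι Y G : Type*} [Fintype ι] {φ : Y → G → ℝ}

def mixture (φ : Y → G → ℝ) (p : ι → ℝ) (γ : ι → G) (y : Y) : ℝ := ∑ i, p i * φ y (γ i)

theorem mixture_mem_of_convex {p : ι → ℝ} {γ : ι → G} {y : Y} {S : Set ℝ}
    (hS : Convex ℝ S) (hp : p ∈ stdSimplex ℝ ι) (hφ : ∀ i, φ y (γ i) ∈ S) :
    mixture φ p γ y ∈ S :=
  hS.sum_mem (fun i _ => hp.1 i) hp.2 fun i _ => hφ i

theorem abs_mixture_sub_mixture_le {p p₀ : ι → ℝ} {γ γ₀ : ι → G} {y : Y}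
    {C η : ℝ} (hp₀ : p₀ ∈ stdSimplex ℝ ι) (hC : ∀ i, |φ y (γ i)| ≤ C)
    (hη : ∀ i, |φ y (γ i) - φ y (γ₀ i)| ≤ η) :
    |mixture φ p γ y - mixture φ p₀ γ₀ y| ≤ C * ∑ i, |p i - p₀ i| + η := by
  have hsplit : mixture φ p γ y - mixture φ p₀ γ₀ y =
      ∑ i, ((p i - p₀ i) * φ y (γ i) + p₀ i * (φ y (γ i) - φ y (γ₀ i))) := by
    simp only [mixture, ← Finset.sum_sub_distrib]
    exact Finset.sum_congr rfl fun i _ => by ring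
  rw [hsplit]
  calc |∑ i, ((p i - p₀ i) * φ y (γ i) + p₀ i * (φ y (γ i) - φ y (γ₀ i)))|
      ≤ ∑ i, (|p i - p₀ i| * C + p₀ i * η) := by
        refine (Finset.abs_sum_le_sum_abs _ _).trans (Finset.sum_le_sum fun i _ => ?_)
        refine (abs_add_le _ _).trans (add_le_add ?_ ?_)
        · rw [abs_mul]
          exact mul_le_mul_of_nonneg_left (hC i) (abs_nonneg _)
        · rw [abs_mul, abs_of_nonneg (hp₀.1 i)]
          exact mul_le_mul_of_nonneg_left (hη i) (hp₀.1 i)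
    _ = C * ∑ i, |p i - p₀ i| + η := by
        rw [Finset.sum_add_distrib, ← Finset.sum_mul, ← Finset.sum_mul, hp₀.2]
        ring

theorem mixture_mem_Icc_sInf_sSup [TopologicalSpace G] {K : Set G}
    {p : ι → ℝ} {γ : ι → G} {y : Y} (hK : IsCompact K) (hφ : ContinuousOn (φ y) K)
    (hp : p ∈ stdSimplex ℝ ι) (hγ : ∀ i, γ i ∈ K) :
    mixture φ p γ y ∈ Icc (sInf (φ y '' K)) (sSup (φ y '' K)) :=
  have hbdd := hK.image_of_continuousOn hφ
  mixture_mem_of_convex (convex_Icc _ _) hp fun i =>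
    ⟨csInf_le hbdd.bddBelow (mem_image_of_mem _ (hγ i)),
      le_csSup hbdd.bddAbove (mem_image_of_mem _ (hγ i))⟩

variable [MeasurableSpace Y] {μ : Measure Y}

theorem integrable_mixture {γ : ι → G}
    (hφ : ∀ i, Integrable (fun y => φ y (γ i)) μ) (p : ι → ℝ) :
    Integrable (mixture φ p γ) μ :=
  integrable_finsetSum _ fun i _ => (hφ i).const_mul (p i)

theorem integral_mixture {γ : ι → G}
    (hφ : ∀ i, ∫ y, φ y (γ i) ∂μ = 1) (p : ι → ℝ) :
    ∫ y, mixture φ p γ y ∂μ = ∑ i, p i := by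
  simp only [mixture]
  rw [integral_finsetSum _ fun i _ => (integrable_of_integral_eq_one (hφ i)).const_mul (p i)]
  simp [integral_const_mul, hφ]

end Mixture

section MixtureNeighbourhood

variable {ι Y G : Type*} [Fintype ι] [PseudoMetricSpace G] {φ : Y → G → ℝ} {K : Set G}
  [MeasurableSpace Y] {μ : Measure Y} {s : Set Y}

theorem exists_forall_integral_mul_log_div_mixture_lt (hs : MeasurableSet s) (hK : IsCompact K)
    (hpos : ∀ y ∈ s, ∀ γ ∈ K, 0 < φ y γ) (hdens : ∀ γ ∈ K, ∫ y in s, φ y γ ∂μ = 1)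
    (hunif : ∀ η > 0, ∃ δ > 0, ∀ y ∈ s, ∀ γ₁ ∈ K, ∀ γ₂ ∈ K,
      dist γ₁ γ₂ < δ → |φ y γ₁ - φ y γ₂| < η)
    {C : ℝ} (hC : ∀ y ∈ s, ∀ γ ∈ K, φ y γ ≤ C)
    {p₀ : ι → ℝ} (hp₀ : p₀ ∈ stdSimplex ℝ ι) {γ₀ : ι → G} (hγ₀ : ∀ i, γ₀ i ∈ K)
    (henv : IntegrableOn (fun y => mixture φ p₀ γ₀ y *
      |log (sSup (φ y '' K)) - log (sInf (φ y '' K))|) s μ)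
    {ε : ℝ} (hε : 0 < ε) :
    ∃ η > 0, ∃ δ > 0, ∀ p ∈ stdSimplex ℝ ι, ∑ i, |p i - p₀ i| < η →
      ∀ γ : ι → G, (∀ i, γ i ∈ K) → (∀ i, dist (γ i) (γ₀ i) < δ) →
        ∫ y in s, mixture φ p₀ γ₀ y * log (mixture φ p₀ γ₀ y / mixture φ p γ y) ∂μ < ε := by
  set f₀ := mixture φ p₀ γ₀
  have hcont (y) (hy : y ∈ s) : ContinuousOn (φ y) K := by
    refine Metric.continuousOn_iff.mpr fun γ hγ η hη => ?_
    obtain ⟨δ, hδ, hφδ⟩ := hunif η hη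
    exact ⟨δ, hδ, fun γ' hγ' hd => hφδ y hy γ' hγ' γ hγ hd⟩
  have hne : K.Nonempty := by
    obtain ⟨i⟩ : Nonempty ι := by
      by_contra h
      simpa [not_nonempty_iff.mp h] using hp₀.2
    exact ⟨γ₀ i, hγ₀ i⟩
  have henvpos (y) (hy : y ∈ s) : 0 < sInf (φ y '' K) :=
    hK.sInf_image_pos hne (hcont y hy) (hpos y hy)
  have hf₀pos : ∀ᵐ y ∂μ.restrict s, 0 < f₀ y := by
    filter_upwards [ae_restrict_mem hs] with y hy
    exact (henvpos y hy).trans_le (mixture_mem_Icc_sInf_sSup hK (hcont y hy) hp₀ hγ₀).1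
  have hf₀int : Integrable f₀ (μ.restrict s) :=
    integrable_mixture (fun i => integrable_of_integral_eq_one (hdens _ (hγ₀ i))) p₀
  have hf₀one : ∫ y in s, f₀ y ∂μ = 1 :=
    (integral_mixture (fun i => hdens _ (hγ₀ i)) p₀).trans hp₀.2
  have hlim := (tendsto_setIntegral_setOf_le_nhds_zero hf₀int.aemeasurable hf₀pos
    henv).mono_left (nhdsWithin_le_nhds (s := Ioi 0))
  obtain ⟨t, hBt, ht : 0 < t⟩ :=
    ((hlim.eventually (gt_mem_nhds (half_pos hε))).and self_mem_nhdsWithin).exists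
  set c := min (t / 2) (t * ε / 8)
  have hc : 0 < c := lt_min (by positivity) (by positivity)
  obtain ⟨δ, hδ, hφδ⟩ := hunif (c / 2) (half_pos hc)
  set C' := max C 1
  refine ⟨c / (2 * C'), by positivity, δ, hδ, fun p hp hpη γ hγK hγδ => ?_⟩
  refine integral_mul_log_div_lt hε ht hf₀int hf₀one henv hBt hf₀pos ?_ ?_
  · filter_upwards [ae_restrict_mem hs] with y hy
    calc |mixture φ p γ y - f₀ y|
        ≤ C' * ∑ i, |p i - p₀ i| + c / 2 :=
          abs_mixture_sub_mixture_le hp₀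
            (fun i => (abs_of_pos (hpos y hy _ (hγK i))).trans_le
              ((hC y hy _ (hγK i)).trans (le_max_left _ _)))
            (fun i => (hφδ y hy _ (hγK i) _ (hγ₀ i) (hγδ i)).le)
      _ ≤ C' * (c / (2 * C')) + c / 2 := by gcongr
      _ = c := by
          have : 0 < C' := lt_max_of_lt_right one_pos
          field_simp; ring
  · filter_upwards [ae_restrict_mem hs, hf₀pos] with y hy hf₀y
    have hf₀env := mixture_mem_Icc_sInf_sSup hK (hcont y hy) hp₀ hγ₀
    have henv := mixture_mem_Icc_sInf_sSup hK (hcont y hy) hp hγK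
    exact mul_le_mul_of_nonneg_left
      (log_div_le_abs_log_sub_log hf₀y (henvpos y hy) hf₀env.2 henv.1) hf₀y.le

end MixtureNeighbourhood

theorem stmt_4_general (𝒴 : Set ℝ) (h𝒴 : MeasurableSet 𝒴) (Γs : Set ℝ)
    (φ : ℝ → ℝ → ℝ) (k₀ : ℕ)
    (hφpos : ∀ y ∈ 𝒴, ∀ γ ∈ Γs, 0 < φ y γ)
    (hφdens : ∀ γ ∈ Γs, (∫ y in 𝒴, φ y γ) = 1)
    (p₀ : Fin k₀ → ℝ) (hp₀nn : ∀ i, 0 ≤ p₀ i) (hp₀sum : ∑ i, p₀ i = 1)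
    (γ₀ : Fin k₀ → ℝ) (hγ₀ : ∀ i, γ₀ i ∈ Γs)
    (ε₁ : ℝ) (hε₁ : 0 < ε₁)
    (hsep : ∀ s j : Fin k₀, s ≠ j → ε₁ ≤ |γ₀ s - γ₀ j|)
    -- condition A1: uniform (in y) uniform continuity of γ ↦ φ(y, γ)
    (hA1 : ∀ η : ℝ, 0 < η → ∃ δ : ℝ, 0 < δ ∧ ∀ y ∈ 𝒴, ∀ γ₁ ∈ Γs, ∀ γ₂ ∈ Γs,
      |γ₁ - γ₂| < δ → |φ y γ₁ - φ y γ₂| < η)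
    -- condition A2: φ is bounded above by a constant
    (hA2 : ∃ Cb : ℝ, ∀ y ∈ 𝒴, ∀ γ ∈ Γs, φ y γ ≤ Cb)
    -- condition A3: integrable log-envelope over a compact set D₀
    (D₀ : Set ℝ) (hD₀c : IsCompact D₀) (hD₀s : D₀ ⊆ Γs)
    (hD₀i : ∀ i, γ₀ i ∈ interior D₀)
    (hA3 : IntegrableOn (fun y => (∑ i, p₀ i * φ y (γ₀ i)) *
        |Real.log (sSup ((fun γ => φ y γ) '' D₀)) -
          Real.log (sInf ((fun γ => φ y γ) '' D₀))|) 𝒴)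
    -- the prior on locations has a continuous Lebesgue density πd on Γ^{k₀}
    (πd : (Fin k₀ → ℝ) → ℝ) (hπdc : Continuous πd)
    -- condition A4: positivity of πd near well-separated configurations
    (hA4 : ∀ x : Fin k₀ → ℝ, (∀ i, x i ∈ Γs) →
      ∀ υ : ℝ, 0 < υ → (∀ s j : Fin k₀, s ≠ j → υ ≤ |x s - x j|) →
      ∃ δ : ℝ, 0 < δ ∧ ∀ γ : Fin k₀ → ℝ, (∑ i, |γ i - x i|) < δ → 0 < πd γ)
    -- the prior lam on the weights charges every relatively open subset of
    -- the simplex and is concentrated on the simplex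
    (lam : Measure (Fin k₀ → ℝ))
    (hlampos : ∀ U : Set (Fin k₀ → ℝ), IsOpen U →
      (U ∩ {p : Fin k₀ → ℝ | (∀ i, 0 ≤ p i) ∧ ∑ i, p i = 1}).Nonempty →
      0 < lam (U ∩ {p : Fin k₀ → ℝ | (∀ i, 0 ≤ p i) ∧ ∑ i, p i = 1})) :
    -- conclusion: f₀ is in the K-L support of the prior
    ∀ ε : ℝ, 0 < ε →
      0 < (lam.prod (volume.withDensity fun γ => ENNReal.ofReal (πd γ)))
        {θ : (Fin k₀ → ℝ) × (Fin k₀ → ℝ) |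
          (∫ y in 𝒴, (∑ i, p₀ i * φ y (γ₀ i)) *
            Real.log ((∑ i, p₀ i * φ y (γ₀ i)) /
              (∑ i, θ.1 i * φ y (θ.2 i)))) < ε} := by
  intro ε hε
  obtain ⟨Cb, hCb⟩ := hA2
  obtain ⟨η, hη, δ, hδ, hKL⟩ := exists_forall_integral_mul_log_div_mixture_lt h𝒴 hD₀c
    (fun y hy γ hγ => hφpos y hy γ (hD₀s hγ)) (fun γ hγ => hφdens γ (hD₀s hγ))
    (fun η hη => (hA1 η hη).imp fun δ ⟨hδ, hφδ⟩ =>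
      ⟨hδ, fun y hy γ₁ hγ₁ γ₂ hγ₂ => hφδ y hy γ₁ (hD₀s hγ₁) γ₂ (hD₀s hγ₂)⟩)
    (fun y hy γ hγ => hCb y hy γ (hD₀s hγ)) ⟨hp₀nn, hp₀sum⟩
    (fun i => interior_subset (hD₀i i)) hA3 hε
  set P := {p : Fin k₀ → ℝ | ∑ i, |p i - p₀ i| < η}
  set W := univ.pi fun i => interior D₀ ∩ Metric.ball (γ₀ i) δ
  have hP : 0 < lam (P ∩ stdSimplex ℝ (Fin k₀)) :=
    hlampos P (isOpen_lt (by fun_prop) continuous_const) ⟨p₀, by simp [P, hη], hp₀nn, hp₀sum⟩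
  have hW : 0 < volume.withDensity (fun γ => ENNReal.ofReal (πd γ)) W := by
    have hWopen : IsOpen W :=
      isOpen_set_pi finite_univ fun i _ => isOpen_interior.inter Metric.isOpen_ball
    obtain ⟨r, hr, hπr⟩ := hA4 γ₀ hγ₀ ε₁ hε₁ hsep
    exact withDensity_ofReal_pos hπdc hWopen (fun i _ => ⟨hD₀i i, Metric.mem_ball_self hδ⟩)
      (hπr γ₀ (by simpa using hr))
  refine (ENNReal.mul_pos hP.ne' hW.ne').trans_le ?_
  rw [← Measure.prod_prod]
  refine measure_mono fun θ ⟨⟨hpη, hp⟩, hγ⟩ => hKL θ.1 hp hpη θ.2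
    (fun i => interior_subset (hγ i trivial).1) fun i => (hγ i trivial).2

/-- Lemma 1: under conditions A1–A4 and positivity of the
Dirichlet-type prior `lam` on the simplex, the true finite mixture `f₀` lies
in the Kullback–Leibler support of the induced prior on mixture densities. -/
theorem stmt_4 (𝒴 : Set ℝ) (h𝒴 : MeasurableSet 𝒴) (Γs : Set ℝ)
    (φ : ℝ → ℝ → ℝ) (k₀ : ℕ) (hk₀ : 1 ≤ k₀)
    (hφpos : ∀ y ∈ 𝒴, ∀ γ ∈ Γs, 0 < φ y γ)
    (hφdens : ∀ γ ∈ Γs, (∫ y in 𝒴, φ y γ) = 1)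
    (p₀ : Fin k₀ → ℝ) (hp₀nn : ∀ i, 0 ≤ p₀ i) (hp₀sum : ∑ i, p₀ i = 1)
    (γ₀ : Fin k₀ → ℝ) (hγ₀ : ∀ i, γ₀ i ∈ Γs)
    (ε₁ : ℝ) (hε₁ : 0 < ε₁)
    (hsep : ∀ s j : Fin k₀, s ≠ j → ε₁ ≤ |γ₀ s - γ₀ j|)
    -- condition A1: uniform (in y) uniform continuity of γ ↦ φ(y, γ)
    (hA1 : ∀ η : ℝ, 0 < η → ∃ δ : ℝ, 0 < δ ∧ ∀ y ∈ 𝒴, ∀ γ₁ ∈ Γs, ∀ γ₂ ∈ Γs,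
      |γ₁ - γ₂| < δ → |φ y γ₁ - φ y γ₂| < η)
    -- condition A2: φ is bounded above by a constant
    (hA2 : ∃ Cb : ℝ, ∀ y ∈ 𝒴, ∀ γ ∈ Γs, φ y γ ≤ Cb)
    -- condition A3: integrable log-envelope over a compact set D₀
    (D₀ : Set ℝ) (hD₀c : IsCompact D₀) (hD₀s : D₀ ⊆ Γs)
    (hD₀i : ∀ i, γ₀ i ∈ interior D₀)
    (hA3 : IntegrableOn (fun y => (∑ i, p₀ i * φ y (γ₀ i)) *
        |Real.log (sSup ((fun γ => φ y γ) '' D₀)) -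
          Real.log (sInf ((fun γ => φ y γ) '' D₀))|) 𝒴)
    -- the prior on locations has a continuous Lebesgue density πd on Γ^{k₀}
    (πd : (Fin k₀ → ℝ) → ℝ) (hπdc : Continuous πd) (hπdnn : ∀ γ, 0 ≤ πd γ)
    (hπsupp : ∀ γ : Fin k₀ → ℝ, (∃ i, γ i ∉ Γs) → πd γ = 0)
    -- condition A4: positivity of πd near well-separated configurations
    (hA4 : ∀ x : Fin k₀ → ℝ, (∀ i, x i ∈ Γs) →
      ∀ υ : ℝ, 0 < υ → (∀ s j : Fin k₀, s ≠ j → υ ≤ |x s - x j|) →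
      ∃ δ : ℝ, 0 < δ ∧ ∀ γ : Fin k₀ → ℝ, (∑ i, |γ i - x i|) < δ → 0 < πd γ)
    -- the prior lam on the weights charges every relatively open subset of
    -- the simplex and is concentrated on the simplex
    (lam : Measure (Fin k₀ → ℝ))
    (hlamsupp : lam {p : Fin k₀ → ℝ | ¬ ((∀ i, 0 ≤ p i) ∧ ∑ i, p i = 1)} = 0)
    (hlampos : ∀ U : Set (Fin k₀ → ℝ), IsOpen U →
      (U ∩ {p : Fin k₀ → ℝ | (∀ i, 0 ≤ p i) ∧ ∑ i, p i = 1}).Nonempty →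
      0 < lam (U ∩ {p : Fin k₀ → ℝ | (∀ i, 0 ≤ p i) ∧ ∑ i, p i = 1})) :
    -- conclusion: f₀ is in the K-L support of the prior
    ∀ ε : ℝ, 0 < ε →
      0 < (lam.prod (volume.withDensity fun γ => ENNReal.ofReal (πd γ)))
        {θ : (Fin k₀ → ℝ) × (Fin k₀ → ℝ) |
          (∫ y in 𝒴, (∑ i, p₀ i * φ y (γ₀ i)) *
            Real.log ((∑ i, p₀ i * φ y (γ₀ i)) /
              (∑ i, θ.1 i * φ y (θ.2 i)))) < ε} :=
  stmt_4_general 𝒴 h𝒴 Γs φ k₀ hφpos hφdens p₀ hp₀nn hp₀sum γ₀ hγ₀ ε₁ hε₁ hsep hA1 hA2 D₀ hD₀c hD₀s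
    hD₀i hA3 πd hπdc hA4 lam hlampos
end

section
/- Let k ≥ 2, τ > 0, let ν be a positive integer, let ξ : ℝ → (0, ∞) be a continuous probability density, and let π be the probability density on ℝ^k proportional to (∏_{j=1}^k ξ(μ_j)) h(μ), where h is either the product repulsion function h(μ) = ∏_{1 ≤ j < s ≤ k} exp(−τ |μ_s − μ_j|^{−ν}) or the minimum repulsion function h(μ) = min_{1 ≤ j < s ≤ k} exp(−τ |μ_s − μ_j|^{−ν}). Let μ_0 ∈ ℝ^k have pairwise distinct coordinates. Then there exist constants u_1, u_2, u_3 > 0 such that for every 0 < ε ≤ u_3, ∫_{{μ : ‖μ − μ_0‖_1 ≤ ε}} π(μ) dμ ≥ u_1 exp(−u_2 k log(1/ε)), i.e. the prior mass of the L¹-ball of radius ε around μ_0 is at least u_1 ε^{u_2 k}. -/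
/-!
The unnormalised density `F μ = (∏ j, ξ (μ j)) * h μ` is integrable because `0 ≤ h ≤ 1`, and it
is continuous and positive at `μ₀`: every repulsion factor is continuous off the diagonal, and the
coordinates of `μ₀` are distinct. Hence `F ≥ F μ₀ / 2` on a small sup-norm ball around `μ₀`. The
sup-norm ball of radius `ε / k` lies inside the L¹-ball of radius `ε` and has volume `(2ε/k)^k`, so
the prior mass of the L¹-ball is at least `(F μ₀ / 2) (2/k)^k ε^k / ∫ F`, and
`ε^k = exp (-(k log (1/ε)))`.
-/

open MeasureTheory Metric Filter Topology

/-- The paper's `g(|b - a|)` with `g(x) = exp(-τ x^(-ν))`, extended by its limit `0` at `x = 0`. -/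
noncomputable def repulsion (τ : ℝ) (ν : ℕ) (a b : ℝ) : ℝ :=
  if b = a then 0 else Real.exp (-(τ * (|b - a| ^ ν)⁻¹))

section Repulsion

variable {τ : ℝ} {ν : ℕ} {a b : ℝ}

lemma repulsion_nonneg : 0 ≤ repulsion τ ν a b := by
  unfold repulsion; split_ifs <;> positivity

lemma repulsion_le_one (hτ : 0 ≤ τ) : repulsion τ ν a b ≤ 1 := by
  unfold repulsion
  split_ifs
  · exact zero_le_one
  · exact Real.exp_le_one_iff.mpr (neg_nonpos.mpr (by positivity))

lemma repulsion_pos (hab : a ≠ b) : 0 < repulsion τ ν a b := by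
  rw [repulsion, if_neg hab.symm]
  exact Real.exp_pos _

lemma measurable_repulsion_apply {ι : Type*} (i j : ι) :
    Measurable fun μ : ι → ℝ => repulsion τ ν (μ i) (μ j) :=
  Measurable.ite (measurableSet_eq_fun (measurable_pi_apply j) (measurable_pi_apply i))
    measurable_const (by fun_prop)

lemma continuousAt_repulsion_apply {ι : Type*} {μ : ι → ℝ} {i j : ι} (hij : μ i ≠ μ j) :
    ContinuousAt (fun μ' : ι → ℝ => repulsion τ ν (μ' i) (μ' j)) μ := by
  have hdist : |μ j - μ i| ^ ν ≠ 0 := pow_ne_zero _ (abs_ne_zero.mpr (sub_ne_zero.mpr hij.symm))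
  have hexp : ContinuousAt (fun μ' : ι → ℝ => Real.exp (-(τ * (|μ' j - μ' i| ^ ν)⁻¹))) μ := by
    fun_prop (disch := exact hdist)
  have hne : ∀ᶠ μ' : ι → ℝ in 𝓝 μ, μ' j ≠ μ' i :=
    (isOpen_ne_fun (continuous_apply j) (continuous_apply i)).mem_nhds hij.symm
  exact hexp.congr (hne.mono fun μ' hμ' => (if_neg hμ').symm)

end Repulsion

def IsProdOrMin {α X : Type*} (s : Finset α) (hs : s.Nonempty) (G : α → X → ℝ) (h : X → ℝ) :
    Prop :=
  (h = fun x => ∏ p ∈ s, G p x) ∨ h = fun x => s.inf' hs (G · x)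

namespace IsProdOrMin

variable {α X : Type*} {s : Finset α} {hs : s.Nonempty} {G : α → X → ℝ} {h : X → ℝ}

lemma nonneg (hh : IsProdOrMin s hs G h) (hG : ∀ p x, 0 ≤ G p x) (x : X) : 0 ≤ h x := by
  rcases hh with rfl | rfl
  · exact Finset.prod_nonneg fun p _ => hG p x
  · exact Finset.le_inf' _ _ fun p _ => hG p x

lemma le_one (hh : IsProdOrMin s hs G h) (hG₀ : ∀ p x, 0 ≤ G p x) (hG₁ : ∀ p x, G p x ≤ 1)
    (x : X) : h x ≤ 1 := by
  rcases hh with rfl | rfl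
  · exact Finset.prod_le_one (fun p _ => hG₀ p x) fun p _ => hG₁ p x
  · obtain ⟨p, hp⟩ := hs
    exact (Finset.inf'_le _ hp).trans (hG₁ p x)

lemma pos (hh : IsProdOrMin s hs G h) {x : X} (hG : ∀ p ∈ s, 0 < G p x) : 0 < h x := by
  rcases hh with rfl | rfl
  · exact Finset.prod_pos hG
  · exact (Finset.lt_inf'_iff _).mpr hG

lemma measurable [MeasurableSpace X] (hh : IsProdOrMin s hs G h) (hG : ∀ p, Measurable (G p)) :
    Measurable h := by
  rcases hh with rfl | rfl
  · exact Finset.measurable_prod _ fun p _ => hG p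
  · simp_rw [← Finset.inf'_apply]
    exact Finset.inf'_induction hs _ (fun _ hf _ hg => hf.inf hg) fun p _ => hG p

lemma continuousAt [TopologicalSpace X] (hh : IsProdOrMin s hs G h) {x : X}
    (hG : ∀ p ∈ s, ContinuousAt (G p) x) : ContinuousAt h x := by
  rcases hh with rfl | rfl
  · exact tendsto_finsetProd s hG
  · exact ContinuousAt.finset_inf'_apply hs hG

end IsProdOrMin

lemma ContinuousAt.exists_closedBall_le {X : Type*} [PseudoMetricSpace X] {f : X → ℝ} {x : X}
    (hf : ContinuousAt f x) {m : ℝ} (hm : m < f x) : ∃ ρ > 0, ∀ y ∈ closedBall x ρ, m ≤ f y := by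
  obtain ⟨ρ, hρ, hball⟩ := nhds_basis_closedBall.eventually_iff.mp (hf (lt_mem_nhds hm))
  exact ⟨ρ, hρ, fun y hy => (hball hy).le⟩

section L1Ball

variable {ι : Type*} [Fintype ι]

def l1ClosedBall (x : ι → ℝ) (ε : ℝ) : Set (ι → ℝ) :=
  {y | ∑ j, |y j - x j| ≤ ε}

-- `closedBall` on `ι → ℝ` is taken for the sup metric: it is a cube.
lemma closedBall_div_card_subset_l1ClosedBall (x : ι → ℝ) {ε : ℝ} (hε : 0 ≤ ε) :
    closedBall x (ε / Fintype.card ι) ⊆ l1ClosedBall x ε := by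
  intro y hy
  calc ∑ j, |y j - x j| ≤ ∑ _j : ι, ε / Fintype.card ι :=
        Finset.sum_le_sum fun j _ => (dist_le_pi_dist y x j).trans (mem_closedBall.mp hy)
    _ = Fintype.card ι * (ε / Fintype.card ι) := by simp
    _ ≤ ε := by
        rcases (Fintype.card ι).eq_zero_or_pos with h0 | hpos
        · simp [h0, hε]
        · rw [mul_div_cancel₀ _ (by positivity)]

lemma mul_pow_le_setIntegral_l1ClosedBall {f : (ι → ℝ) → ℝ} (hf : Integrable f) (hf₀ : 0 ≤ f)
    {x : ι → ℝ} {ε m : ℝ} (hε : 0 ≤ ε) (hm : ∀ y ∈ closedBall x (ε / Fintype.card ι), m ≤ f y) :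
    m * (2 * ε / Fintype.card ι) ^ Fintype.card ι ≤ ∫ y in l1ClosedBall x ε, f y := by
  have hr : 0 ≤ ε / Fintype.card ι := by positivity
  calc m * (2 * ε / Fintype.card ι) ^ Fintype.card ι
      = m * volume.real (closedBall x (ε / Fintype.card ι)) := by
        rw [Measure.real, Real.volume_pi_closedBall x hr, ENNReal.toReal_ofReal (by positivity),
          mul_div_assoc]
    _ ≤ ∫ y in closedBall x (ε / Fintype.card ι), f y :=
        setIntegral_ge_of_const_le_real measurableSet_closedBall measure_closedBall_lt_top.ne hm
          hf.integrableOn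
    _ ≤ ∫ y in l1ClosedBall x ε, f y :=
        setIntegral_mono_set hf.integrableOn (ae_of_all _ hf₀)
          (closedBall_div_card_subset_l1ClosedBall x hε).eventuallyLE

theorem exists_mul_pow_le_setIntegral_l1ClosedBall_div [Nonempty ι] {f : (ι → ℝ) → ℝ}
    (hf : Integrable f) (hf₀ : 0 ≤ f) {x : ι → ℝ} (hfx : ContinuousAt f x) (hx : 0 < f x) :
    ∃ c r : ℝ, 0 < c ∧ 0 < r ∧ ∀ ε, 0 < ε → ε ≤ r →
      c * ε ^ Fintype.card ι ≤ (∫ y in l1ClosedBall x ε, f y) / ∫ y, f y := by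
  set n := Fintype.card ι
  have hn : (1 : ℝ) ≤ n := by exact_mod_cast Fintype.card_pos
  obtain ⟨ρ, hρ, hbound⟩ := hfx.exists_closedBall_le (half_lt_self hx)
  set c := f x / 2 * (2 / n) ^ n
  have hc : 0 < c := by positivity
  have hmass : ∀ ε, 0 ≤ ε → ε ≤ ρ → c * ε ^ n ≤ ∫ y in l1ClosedBall x ε, f y := by
    intro ε hε hερ
    have hsmall : ε / n ≤ ρ := (div_le_self hε hn).trans hερ
    calc c * ε ^ n = f x / 2 * (2 * ε / n) ^ n := by rw [mul_assoc, ← mul_pow]; ring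
      _ ≤ _ := mul_pow_le_setIntegral_l1ClosedBall hf hf₀ hε
          fun y hy => hbound y (closedBall_subset_closedBall hsmall hy)
  have hZ : 0 < ∫ y, f y := calc
    0 < c * ρ ^ n := by positivity
    _ ≤ ∫ y in l1ClosedBall x ρ, f y := hmass ρ hρ.le le_rfl
    _ ≤ ∫ y, f y := setIntegral_le_integral hf (ae_of_all _ hf₀)
  refine ⟨c / ∫ y, f y, ρ, div_pos hc hZ, hρ, fun ε hε hερ => ?_⟩
  rw [div_mul_eq_mul_div]
  exact div_le_div_of_nonneg_right (hmass ε hε.le hερ) hZ.le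

end L1Ball

open MeasureTheory Classical in
theorem stmt_6_general (k : ℕ) (hk : 2 ≤ k) (τ : ℝ) (hτ : 0 < τ) (ν : ℕ)
    (ξ : ℝ → ℝ) (hξc : Continuous ξ) (hξpos : ∀ x, 0 < ξ x)
    (hξdens : (∫ x, ξ x) = 1)
    (h : (Fin k → ℝ) → ℝ)
    (hform :
      (∀ μ : Fin k → ℝ, h μ =
        ∏ p ∈ Finset.univ.filter (fun p : Fin k × Fin k => p.1 < p.2),
          (if μ p.2 = μ p.1 then 0
            else Real.exp (-(τ * (|μ p.2 - μ p.1| ^ ν)⁻¹)))) ∨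
      (∀ μ : Fin k → ℝ, h μ =
        sInf ((fun p : Fin k × Fin k =>
          if μ p.2 = μ p.1 then 0
            else Real.exp (-(τ * (|μ p.2 - μ p.1| ^ ν)⁻¹))) ''
          {p : Fin k × Fin k | p.1 < p.2})))
    (μ₀ : Fin k → ℝ) (hμ₀ : ∀ s j : Fin k, s ≠ j → μ₀ s ≠ μ₀ j) :
    ∃ u₁ u₂ u₃ : ℝ, 0 < u₁ ∧ 0 < u₂ ∧ 0 < u₃ ∧
      ∀ ε : ℝ, 0 < ε → ε ≤ u₃ →
        u₁ * Real.exp (-(u₂ * k * Real.log (1 / ε))) ≤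
          ∫ μ in {μ : Fin k → ℝ | (∑ j, |μ j - μ₀ j|) ≤ ε},
            ((∏ j, ξ (μ j)) * h μ) /
              (∫ μ' : Fin k → ℝ, (∏ j, ξ (μ' j)) * h μ') := by
  set P := Finset.univ.filter fun p : Fin k × Fin k => p.1 < p.2
  have hP : P.Nonempty := ⟨(⟨0, by omega⟩, ⟨1, by omega⟩), by simp [P]⟩
  set G : Fin k × Fin k → (Fin k → ℝ) → ℝ := fun p μ => repulsion τ ν (μ p.1) (μ p.2)
  have hh : IsProdOrMin P hP G h := by
    refine hform.imp funext fun H => funext fun μ => ?_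
    rw [H μ, Finset.inf'_eq_csInf_image]
    congr 2
    ext p
    simp [P]
  have hG₀ : ∀ p μ, 0 ≤ G p μ := fun _ _ => repulsion_nonneg
  have hdistinct : ∀ p ∈ P, μ₀ p.1 ≠ μ₀ p.2 := fun p hp => hμ₀ _ _ (Finset.mem_filter.mp hp).2.ne
  have hξint : Integrable ξ := Integrable.of_integral_ne_zero (by simp [hξdens])
  set F : (Fin k → ℝ) → ℝ := fun μ => (∏ j, ξ (μ j)) * h μ
  have hF₀ : 0 ≤ F := fun μ =>
    mul_nonneg (Finset.prod_nonneg fun j _ => (hξpos _).le) (hh.nonneg hG₀ μ)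
  have hFint : Integrable F := by
    refine (Integrable.fintype_prod fun _ => hξint).mul_bdd (c := 1)
      (hh.measurable fun p => ?_).aestronglyMeasurable (ae_of_all _ fun μ => ?_)
    · exact measurable_repulsion_apply p.1 p.2
    · rw [Real.norm_of_nonneg (hh.nonneg hG₀ μ)]
      exact hh.le_one hG₀ (fun _ _ => repulsion_le_one hτ.le) μ
  have hFcont : ContinuousAt F μ₀ := by
    exact (continuous_finsetProd _ fun j _ => hξc.comp (continuous_apply j)).continuousAt.mul
      (hh.continuousAt fun p hp => continuousAt_repulsion_apply (hdistinct p hp))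
  have hFpos : 0 < F μ₀ :=
    mul_pos (Finset.prod_pos fun j _ => hξpos _) (hh.pos fun p hp => repulsion_pos (hdistinct p hp))
  have : Nonempty (Fin k) := ⟨⟨0, by omega⟩⟩
  obtain ⟨c, r, hc, hr, hmass⟩ :=
    exists_mul_pow_le_setIntegral_l1ClosedBall_div hFint hF₀ hFcont hFpos
  refine ⟨c, 1, r, hc, one_pos, hr, fun ε hε hεr => ?_⟩
  rw [integral_div, one_mul, one_div, Real.log_inv, mul_neg, neg_neg, Real.exp_nat_mul,
    Real.exp_log hε]
  have hmassε := hmass ε hε hεr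
  rwa [Fintype.card_fin] at hmassε

open MeasureTheory Classical in
/-- condition C2: the repulsive prior on locations assigns mass
at least `u₁ exp(−u₂ k log(1/ε)) = u₁ ε^{u₂ k}` to the L¹-ball of radius `ε`
around any configuration `μ₀` with pairwise distinct coordinates. -/
theorem stmt_6 (k : ℕ) (hk : 2 ≤ k) (τ : ℝ) (hτ : 0 < τ) (ν : ℕ) (hν : 1 ≤ ν)
    (ξ : ℝ → ℝ) (hξc : Continuous ξ) (hξpos : ∀ x, 0 < ξ x)
    (hξdens : (∫ x, ξ x) = 1)
    (h : (Fin k → ℝ) → ℝ)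
    (hform :
      (∀ μ : Fin k → ℝ, h μ =
        ∏ p ∈ Finset.univ.filter (fun p : Fin k × Fin k => p.1 < p.2),
          (if μ p.2 = μ p.1 then 0
            else Real.exp (-(τ * (|μ p.2 - μ p.1| ^ ν)⁻¹)))) ∨
      (∀ μ : Fin k → ℝ, h μ =
        sInf ((fun p : Fin k × Fin k =>
          if μ p.2 = μ p.1 then 0
            else Real.exp (-(τ * (|μ p.2 - μ p.1| ^ ν)⁻¹))) ''
          {p : Fin k × Fin k | p.1 < p.2})))
    (μ₀ : Fin k → ℝ) (hμ₀ : ∀ s j : Fin k, s ≠ j → μ₀ s ≠ μ₀ j) :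
    ∃ u₁ u₂ u₃ : ℝ, 0 < u₁ ∧ 0 < u₂ ∧ 0 < u₃ ∧
      ∀ ε : ℝ, 0 < ε → ε ≤ u₃ →
        u₁ * Real.exp (-(u₂ * k * Real.log (1 / ε))) ≤
          ∫ μ in {μ : Fin k → ℝ | (∑ j, |μ j - μ₀ j|) ≤ ε},
            ((∏ j, ξ (μ j)) * h μ) /
              (∫ μ' : Fin k → ℝ, (∏ j, ξ (μ' j)) * h μ') :=
  stmt_6_general k hk τ hτ ν ξ hξc hξpos hξdens h hform μ₀ hμ₀
end
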